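/- For every s > 0 and P > 0, the near-field joint density p_NF^S(x₁,x₂) = (1/(√(2πs)·A₁·P)) · e^{−(x₁+x₂)²/(2s)} · sint²((x₁−x₂)²/(4P²)) has second moment ∫_{ℝ²} x₁² p_NF^S(x₁,x₂) dx₁ dx₂ = (1/4)(s + 4A₂P²/A₁), where A₁ := ∫_ℝ sint²(ξ²) dξ and A₂ := ∫_ℝ ξ² sint²(ξ²) dξ. -/

import Mathlib

open MeasureTheory Real

/-- `sinc x = sin x / x` for `x ≠ 0`, and `sinc 0 = 1`. -/
noncomputable def sinc (x : ℝ) : ℝ := if x = 0 then 1 else Real.sin x / x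

/-- `sint x = 1 − (2/π) ∫₀ˣ sinc t dt`. -/
noncomputable def sint (x : ℝ) : ℝ := 1 - (2 / Real.pi) * ∫ t in (0:ℝ)..x, _root_.sinc t

/-- `A₁ = ∫_ℝ sint²(ξ²) dξ`. -/
noncomputable def A₁ : ℝ := ∫ ξ : ℝ, (sint (ξ ^ 2)) ^ 2

/-- The near-field joint probability density of the SPDC two-photon state. -/
noncomputable def pNF (s P x₁ x₂ : ℝ) : ℝ :=
  (Real.sqrt (2 * Real.pi * s) * A₁ * P)⁻¹ * Real.exp (-(x₁ + x₂) ^ 2 / (2 * s)) *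
    (sint ((x₁ - x₂) ^ 2 / (4 * P ^ 2))) ^ 2

/-- `A₂ = ∫_ℝ ξ² sint²(ξ²) dξ`. -/
noncomputable def A₂ : ℝ := ∫ ξ : ℝ, ξ ^ 2 * (sint (ξ ^ 2)) ^ 2

/-!
In the variables `u = x₁ + x₂`, `v = x₁ - x₂` (Jacobian `1/2`) the density factors into a
centred Gaussian of variance `s` in `u` times `sint² (v² / 4P²) / (2 A₁ P)` in `v`, and
`x₁² = (u + v)² / 4`. The cross term vanishes because the Gaussian has mean zero, the `u²` term
contributes `s` and, after rescaling `v = 2Pξ`, the `v²` term contributes `4 P² A₂ / A₁`.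

The analytic input is the integrability of `ξ² sint² (ξ²)`, which needs the decay
`|sint x| ≤ 2 / x`. This is the Dirichlet integral with an explicit remainder: writing
`1 / t = ∫₀^∞ e^{-yt} dy` and integrating in `t` first gives
`∫₀ᵀ sinc = π / 2 - ∫₀^∞ e^{-yT} (cos T + y sin T) / (1 + y²) dy`,
and the last integral is at most `2 / T`.
-/

open Filter Set ProbabilityTheory
open scoped NNReal

-- The `sinc` of the statement is definitionally Mathlib's `Real.sinc`.
lemma sint_eq (x : ℝ) : sint x = 1 - 2 / π * ∫ t in (0:ℝ)..x, Real.sinc t := rfl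

lemma integral_exp_neg_mul_mul_sin (y T : ℝ) :
    ∫ t in (0:ℝ)..T, exp (-(y * t)) * sin t
      = (1 - exp (-(y * T)) * (cos T + y * sin T)) / (1 + y ^ 2) := by
  have hderiv (t : ℝ) :
      HasDerivAt (fun t => -(exp (-(y * t)) * (cos t + y * sin t)) / (1 + y ^ 2))
        (exp (-(y * t)) * sin t) t := by
    refine ((((hasDerivAt_id t).const_mul y).neg.exp.mul
      ((hasDerivAt_cos t).add ((hasDerivAt_sin t).const_mul y))).neg.div_const _).congr_deriv ?_
    simp only [id, Pi.neg_apply, Pi.add_apply]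
    field_simp
    ring
  rw [intervalIntegral.integral_eq_sub_of_hasDerivAt (fun t _ => hderiv t)
    ((by fun_prop : Continuous fun t => exp (-(y * t)) * sin t).intervalIntegrable _ _)]
  simp only [mul_zero, neg_zero, exp_zero, cos_zero, sin_zero, one_mul, add_zero]
  ring

lemma integral_exp_neg_mul_Ioi_zero {c : ℝ} (hc : 0 < c) :
    ∫ y in Ioi (0:ℝ), exp (-(c * y)) = 1 / c := by
  simpa [neg_mul, div_neg, neg_div, one_div] using integral_exp_mul_Ioi (neg_lt_zero.2 hc) 0

lemma abs_exp_neg_mul_mul_cos_add_mul_sin_div_le {y : ℝ} (hy : 0 ≤ y) (T : ℝ) :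
    |exp (-(y * T)) * (cos T + y * sin T) / (1 + y ^ 2)| ≤ 2 * exp (-(T * y)) := by
  have hcs : |cos T + y * sin T| ≤ 1 + y := by
    calc |cos T + y * sin T| ≤ |cos T| + y * |sin T| := by
          simpa [abs_mul, abs_of_nonneg hy] using abs_add_le (cos T) (y * sin T)
      _ ≤ 1 + y := add_le_add (abs_cos_le_one T) (mul_le_of_le_one_right hy (abs_sin_le_one T))
  have hd : (0:ℝ) < 1 + y ^ 2 := by positivity
  rw [abs_div, abs_mul, abs_of_pos (exp_pos _), abs_of_pos hd, div_le_iff₀ hd, mul_comm T y]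
  calc exp (-(y * T)) * |cos T + y * sin T| ≤ exp (-(y * T)) * (1 + y) := by gcongr
    _ ≤ 2 * exp (-(y * T)) * (1 + y ^ 2) := by nlinarith [exp_pos (-(y * T)), sq_nonneg (y - 1)]

lemma integrable_exp_neg_mul_mul_sin_prod (T : ℝ) :
    Integrable (fun p : ℝ × ℝ => exp (-(p.2 * p.1)) * sin p.1)
      ((volume.restrict (Ioc 0 T)).prod (volume.restrict (Ioi 0))) := by
  have hm : AEStronglyMeasurable (fun p : ℝ × ℝ => exp (-(p.2 * p.1)) * sin p.1)
      ((volume.restrict (Ioc 0 T)).prod (volume.restrict (Ioi 0))) :=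
    Continuous.aestronglyMeasurable (by fun_prop)
  have hfiber {t : ℝ} (ht : 0 < t) :
      ∫ y in Ioi 0, ‖exp (-(y * t)) * sin t‖ = |sin t| / t := by
    simp_rw [norm_mul, norm_of_nonneg (exp_pos _).le, mul_comm _ t, integral_mul_const,
      integral_exp_neg_mul_Ioi_zero ht, norm_eq_abs]
    ring
  refine (integrable_prod_iff hm).2 ⟨?_, ?_⟩
  · filter_upwards [ae_restrict_mem measurableSet_Ioc] with t ht
    simpa [mul_comm _ t] using (exp_neg_integrableOn_Ioi 0 ht.1).mul_const (sin t)
  · refine Integrable.mono' (integrableOn_const measure_Ioc_lt_top.ne (C := (1:ℝ)))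
      hm.norm.integral_prod_right' ?_
    filter_upwards [ae_restrict_mem measurableSet_Ioc] with t ht
    rw [norm_of_nonneg (integral_nonneg fun _ => norm_nonneg _), hfiber ht.1,
      div_le_one ht.1]
    exact (abs_sin_le_abs).trans (abs_of_pos ht.1).le

lemma integral_sinc_eq {T : ℝ} (hT : 0 < T) :
    ∫ t in (0:ℝ)..T, Real.sinc t
      = π / 2 - ∫ y in Ioi (0:ℝ), exp (-(y * T)) * (cos T + y * sin T) / (1 + y ^ 2) := by
  have hinner_y {t : ℝ} (ht : 0 < t) : ∫ y in Ioi 0, exp (-(y * t)) * sin t = Real.sinc t := by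
    simp_rw [mul_comm _ t]
    rw [integral_mul_const, integral_exp_neg_mul_Ioi_zero ht, Real.sinc_of_ne_zero ht.ne']
    ring
  have hinner_t (y : ℝ) : ∫ t in Ioc 0 T, exp (-(y * t)) * sin t
      = (1 + y ^ 2)⁻¹ - exp (-(y * T)) * (cos T + y * sin T) / (1 + y ^ 2) := by
    rw [← intervalIntegral.integral_of_le hT.le, integral_exp_neg_mul_mul_sin]
    ring
  have hrem :
      IntegrableOn (fun y => exp (-(y * T)) * (cos T + y * sin T) / (1 + y ^ 2)) (Ioi 0) := by
    refine Integrable.mono' (by simpa using (exp_neg_integrableOn_Ioi 0 hT).const_mul 2)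
      ((by fun_prop : Continuous fun y => exp (-(y * T)) * (cos T + y * sin T)).div
        (by fun_prop) (fun y => by positivity)).aestronglyMeasurable ?_
    filter_upwards [ae_restrict_mem measurableSet_Ioi] with y hy
    exact abs_exp_neg_mul_mul_cos_add_mul_sin_div_le (le_of_lt hy) T
  calc ∫ t in (0:ℝ)..T, Real.sinc t
        = ∫ t in Ioc 0 T, ∫ y in Ioi 0, exp (-(y * t)) * sin t := by
        rw [intervalIntegral.integral_of_le hT.le]
        exact setIntegral_congr_fun measurableSet_Ioc fun t ht => (hinner_y ht.1).symm
    _ = ∫ y in Ioi 0, ∫ t in Ioc 0 T, exp (-(y * t)) * sin t :=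
        integral_integral_swap (integrable_exp_neg_mul_mul_sin_prod T)
    _ = _ := by
        simp_rw [hinner_t]
        rw [integral_sub integrable_inv_one_add_sq.integrableOn hrem, integral_Ioi_inv_one_add_sq,
          arctan_zero, sub_zero]

lemma abs_pi_div_two_sub_integral_sinc_le {T : ℝ} (hT : 0 < T) :
    |π / 2 - ∫ t in (0:ℝ)..T, Real.sinc t| ≤ 2 / T := by
  rw [integral_sinc_eq hT, sub_sub_cancel, ← norm_eq_abs]
  calc _ ≤ ∫ y in Ioi (0:ℝ), 2 * exp (-(T * y)) :=
        norm_integral_le_of_norm_le (by simpa using (exp_neg_integrableOn_Ioi 0 hT).const_mul 2)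
          (by filter_upwards [ae_restrict_mem measurableSet_Ioi] with y hy
              exact abs_exp_neg_mul_mul_cos_add_mul_sin_div_le (le_of_lt hy) T)
    _ = 2 / T := by rw [integral_const_mul, integral_exp_neg_mul_Ioi_zero hT]; ring

@[fun_prop]
lemma continuous_sint : Continuous sint :=
  continuous_const.sub (continuous_const.mul
    (intervalIntegral.continuous_primitive (Real.continuous_sinc.intervalIntegrable) 0))

lemma sint_zero : sint 0 = 1 := by simp [sint_eq]

lemma abs_sint_le_two_div {x : ℝ} (hx : 0 < x) : |sint x| ≤ 2 / x := by
  have hsint : sint x = 2 / π * (π / 2 - ∫ t in (0:ℝ)..x, Real.sinc t) := by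
    rw [sint_eq]; field_simp
  rw [hsint, abs_mul, abs_of_pos (by positivity)]
  calc _ ≤ 1 * (2 / x) := mul_le_mul ((div_le_one pi_pos).2 two_le_pi)
        (abs_pi_div_two_sub_integral_sinc_le hx) (abs_nonneg _) zero_le_one
    _ = 2 / x := one_mul _

lemma abs_sint_le_one_add {x : ℝ} (hx : 0 ≤ x) : |sint x| ≤ 1 + x := by
  have hSi : |∫ t in (0:ℝ)..x, Real.sinc t| ≤ x := by
    simpa [abs_of_nonneg hx] using intervalIntegral.norm_integral_le_of_norm_le_const
      (a := 0) (b := x) (fun t _ => (Real.norm_eq_abs _).trans_le (Real.abs_sinc_le_one t))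
  have h2pi : 2 / π ≤ 1 := (div_le_one pi_pos).2 two_le_pi
  calc |sint x| ≤ 1 + 2 / π * |∫ t in (0:ℝ)..x, Real.sinc t| := by
        rw [sint_eq]
        refine (abs_sub _ _).trans_eq ?_
        rw [abs_one, abs_mul, abs_of_pos (by positivity : 0 < 2 / π)]
    _ ≤ 1 + 1 * x := by gcongr
    _ = 1 + x := by ring

lemma abs_sint_mul_one_add_le {x : ℝ} (hx : 0 ≤ x) : |sint x| * (1 + x) ≤ 4 := by
  rcases le_or_gt x 1 with hx1 | hx1
  · nlinarith [abs_sint_le_one_add hx]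
  · have hx0 : 0 < x := zero_lt_one.trans hx1
    calc |sint x| * (1 + x) ≤ 2 / x * (1 + x) := by gcongr; exact abs_sint_le_two_div hx0
      _ = 2 / x + 2 := by field_simp
      _ ≤ 4 := by linarith [(div_le_iff₀ hx0).2 (by linarith : 2 ≤ 2 * x)]

lemma integrable_one_add_sq_mul_sint_sq_comp_sq :
    Integrable fun ξ : ℝ => (1 + ξ ^ 2) * sint (ξ ^ 2) ^ 2 := by
  refine Integrable.mono' (integrable_inv_one_add_sq.const_mul 16)
    (Continuous.aestronglyMeasurable (by fun_prop)) (ae_of_all _ fun ξ => ?_)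
  have hd : (0:ℝ) < 1 + ξ ^ 2 := by positivity
  have h16 := pow_le_pow_left₀ (by positivity) (abs_sint_mul_one_add_le (sq_nonneg ξ)) 2
  rw [mul_pow, sq_abs] at h16
  rw [norm_of_nonneg (by positivity), ← div_eq_mul_inv, le_div_iff₀ hd]
  nlinarith [h16]

lemma integrable_sint_sq_comp_sq : Integrable fun ξ : ℝ => sint (ξ ^ 2) ^ 2 :=
  integrable_one_add_sq_mul_sint_sq_comp_sq.mono'
    (Continuous.aestronglyMeasurable (by fun_prop))
    (ae_of_all _ fun ξ => by
      rw [norm_of_nonneg (sq_nonneg _)]; nlinarith [sq_nonneg ξ, sq_nonneg (sint (ξ ^ 2))])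

lemma integrable_sq_mul_sint_sq_comp_sq : Integrable fun ξ : ℝ => ξ ^ 2 * sint (ξ ^ 2) ^ 2 :=
  integrable_one_add_sq_mul_sint_sq_comp_sq.mono'
    (Continuous.aestronglyMeasurable (by fun_prop))
    (ae_of_all _ fun ξ => by
      rw [norm_of_nonneg (by positivity)]; nlinarith [sq_nonneg (sint (ξ ^ 2))])

lemma A₁_pos : 0 < A₁ := by
  have hcont : Continuous fun ξ : ℝ => sint (ξ ^ 2) ^ 2 := by fun_prop
  rw [A₁, integral_pos_iff_support_of_nonneg (fun ξ => sq_nonneg _) integrable_sint_sq_comp_sq]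
  exact hcont.isOpen_support.measure_pos volume ⟨0, by simp [sint_zero]⟩

lemma sq_div_four_mul_sq_eq (P v : ℝ) : v ^ 2 / (4 * P ^ 2) = ((2 * P)⁻¹ * v) ^ 2 := by
  rw [mul_pow, inv_pow, mul_pow]; ring

lemma integrable_sint_sq_comp_sq_div {P : ℝ} (hP : P ≠ 0) :
    Integrable fun v : ℝ => sint (v ^ 2 / (4 * P ^ 2)) ^ 2 := by
  simp_rw [sq_div_four_mul_sq_eq P]
  exact integrable_sint_sq_comp_sq.comp_mul_left' (by simpa using hP)

lemma integral_sint_sq_comp_sq_div (P : ℝ) :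
    ∫ v : ℝ, sint (v ^ 2 / (4 * P ^ 2)) ^ 2 = 2 * |P| * A₁ := by
  simp_rw [sq_div_four_mul_sq_eq P]
  rw [Measure.integral_comp_mul_left (fun ξ => sint (ξ ^ 2) ^ 2), inv_inv, ← A₁, smul_eq_mul,
    abs_mul, abs_two]

lemma integrable_sq_mul_sint_sq_comp_sq_div {P : ℝ} (hP : P ≠ 0) :
    Integrable fun v : ℝ => v ^ 2 * sint (v ^ 2 / (4 * P ^ 2)) ^ 2 := by
  have h := (integrable_sq_mul_sint_sq_comp_sq.comp_mul_left'
    (inv_ne_zero (mul_ne_zero two_ne_zero hP))).const_mul ((2 * P) ^ 2)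
  refine h.congr (ae_of_all _ fun v => ?_)
  simp only [sq_div_four_mul_sq_eq P]
  field_simp

lemma integral_sq_mul_sint_sq_comp_sq_div {P : ℝ} (hP : P ≠ 0) :
    ∫ v : ℝ, v ^ 2 * sint (v ^ 2 / (4 * P ^ 2)) ^ 2 = 8 * |P| * P ^ 2 * A₂ := by
  have hscale (v : ℝ) : v ^ 2 * sint (v ^ 2 / (4 * P ^ 2)) ^ 2
      = (2 * P) ^ 2 * (((2 * P)⁻¹ * v) ^ 2 * sint (((2 * P)⁻¹ * v) ^ 2) ^ 2) := by
    rw [sq_div_four_mul_sq_eq P]; field_simp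
  simp_rw [hscale]
  rw [integral_const_mul, Measure.integral_comp_mul_left (fun ξ => ξ ^ 2 * sint (ξ ^ 2) ^ 2),
    inv_inv, ← A₂, smul_eq_mul, abs_mul, abs_two]
  ring

section Gaussian

variable {μ : ℝ} {v : ℝ≥0}

lemma integrable_gaussianPDFReal_smul {E : Type*} [NormedAddCommGroup E] [NormedSpace ℝ E]
    {f : ℝ → E} (hv : v ≠ 0) (hf : Integrable f (gaussianReal μ v)) :
    Integrable fun x => gaussianPDFReal μ v x • f x := by
  rw [gaussianReal_of_var_ne_zero _ hv, integrable_withDensity_iff_integrable_smul'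
    (measurable_gaussianPDF _ _) (ae_of_all _ fun _ => gaussianPDF_lt_top)] at hf
  simpa [toReal_gaussianPDF] using hf

lemma integrable_sq_mul_gaussianPDFReal (hv : v ≠ 0) :
    Integrable fun x => x ^ 2 * gaussianPDFReal μ v x := by
  simpa [mul_comm] using integrable_gaussianPDFReal_smul hv
    (memLp_id_gaussianReal (μ := μ) (v := v) 2).integrable_sq

lemma integral_mul_gaussianPDFReal (hv : v ≠ 0) :
    ∫ x, x * gaussianPDFReal μ v x = μ := by
  simp_rw [mul_comm _ (gaussianPDFReal μ v _), ← smul_eq_mul,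
    ← integral_gaussianReal_eq_integral_smul hv, integral_id_gaussianReal]

lemma integral_sq_mul_gaussianPDFReal (hv : v ≠ 0) :
    ∫ x, x ^ 2 * gaussianPDFReal μ v x = v + μ ^ 2 := by
  have h := variance_eq_sub (memLp_id_gaussianReal (μ := μ) (v := v) 2)
  simp only [variance_id_gaussianReal, Pi.pow_apply, id, integral_id_gaussianReal] at h
  rw [integral_gaussianReal_eq_integral_smul hv] at h
  simp_rw [mul_comm _ (gaussianPDFReal μ v _), ← smul_eq_mul]
  linarith

end Gaussian

section Product

variable {μ ν : Measure ℝ}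

lemma integrable_mul_of_integrable_sq_mul {f : ℝ → ℝ} (hf : Integrable f μ)
    (hf2 : Integrable (fun x => x ^ 2 * f x) μ) : Integrable (fun x => x * f x) μ := by
  refine (hf.norm.add hf2.norm).mono'
    (continuous_id.aestronglyMeasurable.mul hf.aestronglyMeasurable) (ae_of_all _ fun x => ?_)
  have hx : |x| ≤ 1 + x ^ 2 := by nlinarith [sq_abs x, abs_nonneg x, sq_nonneg (|x| - 1)]
  simp only [norm_mul, norm_pow, Pi.add_apply, norm_eq_abs, sq_abs]
  nlinarith [abs_nonneg (f x)]

lemma integral_add_sq_mul_mul [SFinite μ] [SFinite ν] {f g : ℝ → ℝ} (hf : Integrable f μ)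
    (hf2 : Integrable (fun x => x ^ 2 * f x) μ) (hg : Integrable g ν)
    (hg2 : Integrable (fun y => y ^ 2 * g y) ν) :
    ∫ q, (q.1 + q.2) ^ 2 * (f q.1 * g q.2) ∂(μ.prod ν)
      = (∫ x, x ^ 2 * f x ∂μ) * (∫ y, g y ∂ν)
        + 2 * ((∫ x, x * f x ∂μ) * ∫ y, y * g y ∂ν)
        + (∫ x, f x ∂μ) * ∫ y, y ^ 2 * g y ∂ν := by
  have hexpand (q : ℝ × ℝ) : (q.1 + q.2) ^ 2 * (f q.1 * g q.2)
      = q.1 ^ 2 * f q.1 * g q.2 + 2 * (q.1 * f q.1 * (q.2 * g q.2))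
        + f q.1 * (q.2 ^ 2 * g q.2) := by
    ring
  have hcross := ((integrable_mul_of_integrable_sq_mul hf hf2).mul_prod
    (integrable_mul_of_integrable_sq_mul hg hg2)).const_mul 2
  simp_rw [hexpand]
  rw [integral_add ((hf2.mul_prod hg).fun_add hcross) (hf.mul_prod hg2),
    integral_add (hf2.mul_prod hg) hcross,
    integral_const_mul, integral_prod_mul (fun x => x ^ 2 * f x) g,
    integral_prod_mul (fun x => x * f x) (fun y => y * g y),
    integral_prod_mul f (fun y => y ^ 2 * g y)]

end Product

lemma integral_comp_linearMap_addHaar {E F : Type*} [NormedAddCommGroup E] [NormedSpace ℝ E]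
    [MeasurableSpace E] [BorelSpace E] [FiniteDimensional ℝ E] [NormedAddCommGroup F]
    [NormedSpace ℝ F] (μ : Measure E) [μ.IsAddHaarMeasure] {f : E →ₗ[ℝ] E}
    (hf : LinearMap.det f ≠ 0) (G : E → F) :
    ∫ x, G (f x) ∂μ = |(LinearMap.det f)⁻¹| • ∫ x, G x ∂μ := by
  let e := (f.equivOfDetNeZero hf).toContinuousLinearEquiv.toHomeomorph.toMeasurableEquiv
  rw [show (∫ x, G (f x) ∂μ) = ∫ x, G (e x) ∂μ from rfl, ← integral_map_equiv e G,
    show Measure.map e μ = Measure.map f μ from rfl,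
    Measure.map_linearMap_addHaar_eq_smul_addHaar μ hf, integral_smul_measure,
    ENNReal.toReal_ofReal (abs_nonneg _)]

def sumDiff : (ℝ × ℝ) →ₗ[ℝ] ℝ × ℝ :=
  (LinearMap.fst ℝ ℝ ℝ + LinearMap.snd ℝ ℝ ℝ).prod
    (LinearMap.fst ℝ ℝ ℝ - LinearMap.snd ℝ ℝ ℝ)

lemma sumDiff_apply (x : ℝ × ℝ) : sumDiff x = (x.1 + x.2, x.1 - x.2) := rfl

lemma det_sumDiff : LinearMap.det sumDiff = -2 := by
  rw [← LinearMap.det_toMatrix (Module.Basis.finTwoProd ℝ), Matrix.det_fin_two]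
  simp [LinearMap.toMatrix_apply, sumDiff_apply]
  norm_num

lemma pNF_eq {s : ℝ} (hs : 0 ≤ s) (P x₁ x₂ : ℝ) :
    pNF s P x₁ x₂ = (A₁ * P)⁻¹ * (gaussianPDFReal 0 s.toNNReal (x₁ + x₂)
      * sint ((x₁ - x₂) ^ 2 / (4 * P ^ 2)) ^ 2) := by
  rw [pNF, gaussianPDFReal, Real.coe_toNNReal _ hs, sub_zero, mul_inv, mul_inv]
  ring

/-- For every `s > 0` and `P > 0`, the second moment of the near-field joint
density is `∫ x₁² p_NF^S(x₁,x₂) dx₁ dx₂ = (1/4)(s + 4A₂P²/A₁)`. -/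
theorem pNF_secondMoment (s P : ℝ) (hs : 0 < s) (hP : 0 < P) :
    ∫ x : ℝ × ℝ, x.1 ^ 2 * pNF s P x.1 x.2
      = (1 / 4) * (s + 4 * A₂ * P ^ 2 / A₁) := by
  set g := gaussianPDFReal 0 s.toNNReal
  set h : ℝ → ℝ := fun v => sint (v ^ 2 / (4 * P ^ 2)) ^ 2
  set F : ℝ × ℝ → ℝ := fun q => (q.1 + q.2) ^ 2 * (g q.1 * h q.2)
  have hv : s.toNNReal ≠ 0 := by simpa using hs
  have hmoment (x : ℝ × ℝ) :
      x.1 ^ 2 * pNF s P x.1 x.2 = (4 * A₁ * P)⁻¹ * F (sumDiff x) := by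
    rw [pNF_eq hs.le, sumDiff_apply]
    ring
  calc ∫ x : ℝ × ℝ, x.1 ^ 2 * pNF s P x.1 x.2
      = (4 * A₁ * P)⁻¹ * (|(-2 : ℝ)⁻¹| * ∫ q, F q ∂(volume.prod volume)) := by
        simp_rw [hmoment]
        rw [integral_const_mul, integral_comp_linearMap_addHaar volume (by simp [det_sumDiff]),
          det_sumDiff, Measure.volume_eq_prod, smul_eq_mul]
    _ = (4 * A₁ * P)⁻¹ * (|(-2 : ℝ)⁻¹| * (s * (2 * P * A₁) + 2 * (0 * ∫ v, v * h v)
          + 1 * (8 * P * P ^ 2 * A₂))) := by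
        rw [integral_add_sq_mul_mul (integrable_gaussianPDFReal 0 _)
          (integrable_sq_mul_gaussianPDFReal hv) (integrable_sint_sq_comp_sq_div hP.ne')
          (integrable_sq_mul_sint_sq_comp_sq_div hP.ne'), integral_gaussianPDFReal_eq_one 0 hv,
          integral_mul_gaussianPDFReal hv, integral_sq_mul_gaussianPDFReal hv,
          integral_sint_sq_comp_sq_div, integral_sq_mul_sint_sq_comp_sq_div hP.ne',
          Real.coe_toNNReal _ hs.le, abs_of_pos hP]
        ring
    _ = (1 / 4) * (s + 4 * A₂ * P ^ 2 / A₁) := by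
        field_simp [A₁_pos.ne']
        norm_num
        ring
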